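/- Let M be a monoid and N a finite commutative monoid. Let F be a finite family of monoid homomorphisms f : M → N and g(a) = ∏_{f∈F} f(a). Then for every subset S ⊆ M, [g(S)†] ⊆ ⊗_{f∈F} [f(S)†], i.e., the coset generated by the regularized image under g is contained in the product of the cosets generated by the regularized images under the individual f. -/
import Mathlib


open Pointwise

/-- The set of group inverses of the elements of `U`: `b` is the inverse of a (completely
regular) element `a` when `ab = ba`, `a²b = a` and `b²a = b`. -/
def InvSet {N : Type*} [Monoid N] (U : Set N) : Set N :=
  {b | ∃ a ∈ U, a * b = b * a ∧ a * a * b = a ∧ b * b * a = b}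

/-- The coset generated by `R`: `[R] = R ⊗ ⟨R⁻¹ ⊗ R⟩`. -/
def CosetGen {N : Type*} [Monoid N] (R : Set N) : Set N :=
  R * (Submonoid.closure (InvSet R * R) : Set N)

/-- The regularization `R† = {b · d_b : b ∈ R}`, where `d_b` is the unique idempotent
positive power of `b`. -/
def Dagger {N : Type*} [Monoid N] (R : Set N) : Set N :=
  {x | ∃ b ∈ R, ∃ n : ℕ, 0 < n ∧ b ^ n * b ^ n = b ^ n ∧ x = b * b ^ n}

section Aux

variable {N : Type*}

private lemma pow_reduce [Monoid N] {b : N} {n : ℕ} (h : b ^ n * b ^ n = b ^ n) :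
    ∀ q t : ℕ, b ^ (n + q * n + t) = b ^ (n + t) := by
  intro q
  induction q with
  | zero => intro t; norm_num
  | succ q ih =>
    intro t
    rw [show n + (q + 1) * n + t = n + q * n + (n + t) by ring, ih (n + t),
      show n + (n + t) = (n + n) + t by ring, pow_add, pow_add, h, ← pow_add]

private lemma exists_idem_pow [Monoid N] [Finite N] (b : N) :
    ∃ n : ℕ, 0 < n ∧ b ^ n * b ^ n = b ^ n := by
  obtain ⟨i, j, hne, hij⟩ := Finite.exists_ne_map_eq_of_infinite (fun n : ℕ => b ^ (n + 1))
  wlog hlt : i < j generalizing i j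
  · exact this j i hne.symm hij.symm (by omega)
  set m := i + 1 with hm
  set r := j - i with hr
  have hr0 : 0 < r := by omega
  have hmr : b ^ (m + r) = b ^ m := by
    rw [show m + r = j + 1 by omega]
    exact hij.symm
  have step : ∀ t : ℕ, b ^ (m + t + r) = b ^ (m + t) := by
    intro t
    rw [show m + t + r = (m + r) + t by ring, pow_add, hmr, ← pow_add]
  have key : ∀ t q : ℕ, b ^ (m + t + q * r) = b ^ (m + t) := by
    intro t q
    induction q with
    | zero => norm_num
    | succ q ih =>
      rw [show m + t + (q + 1) * r = (m + (t + q * r)) + r by ring, step (t + q * r),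
        show m + (t + q * r) = m + t + q * r by ring, ih]
  have hle : m ≤ m * r := Nat.le_mul_of_pos_right m hr0
  refine ⟨m * r, by positivity, ?_⟩
  rw [← pow_add, show m * r + m * r = (m + (m * r - m)) + m * r by omega, key (m * r - m) m]
  congr 1
  omega

private lemma exists_uniform_idem [Monoid N] [Finite N] :
    ∃ n : ℕ, 0 < n ∧ ∀ b : N, b ^ n * b ^ n = b ^ n := by
  classical
  cases nonempty_fintype N
  choose nf h1 h2 using exists_idem_pow (N := N)
  refine ⟨∏ x : N, nf x, Finset.prod_pos (fun x _ => h1 x), fun b => ?_⟩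
  have hsplit : (∏ x : N, nf x) = nf b * ∏ x ∈ Finset.univ.erase b, nf x :=
    (Finset.mul_prod_erase _ _ (Finset.mem_univ b)).symm
  have hk : 0 < ∏ x ∈ Finset.univ.erase b, nf x :=
    Finset.prod_pos (fun x _ => h1 x)
  have : b ^ (∏ x : N, nf x) = b ^ nf b := by
    rw [hsplit, pow_mul, show (∏ x ∈ Finset.univ.erase b, nf x) =
      (∏ x ∈ Finset.univ.erase b, nf x) - 1 + 1 by omega]
    exact IsIdempotentElem.pow_succ_eq _ (h2 b)
  rw [this]
  exact h2 b

private lemma dagger_pow_unique [Monoid N] {b : N} {n m : ℕ} (hn : 0 < n) (hm : 0 < m)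
    (h1 : b ^ n * b ^ n = b ^ n) (h2 : b ^ m * b ^ m = b ^ m) : b ^ n = b ^ m := by
  have e1 : (b ^ n) ^ m = b ^ n := by
    rw [show m = (m - 1) + 1 by omega]
    exact IsIdempotentElem.pow_succ_eq _ h1
  have e2 : (b ^ m) ^ n = b ^ m := by
    rw [show n = (n - 1) + 1 by omega]
    exact IsIdempotentElem.pow_succ_eq _ h2
  calc b ^ n = (b ^ n) ^ m := e1.symm
    _ = b ^ (n * m) := (pow_mul b n m).symm
    _ = b ^ (m * n) := by rw [Nat.mul_comm]
    _ = (b ^ m) ^ n := pow_mul b m n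
    _ = b ^ m := e2

private lemma mem_dagger_iff [Monoid N] {n : ℕ} (hn : 0 < n)
    (hidem : ∀ b : N, b ^ n * b ^ n = b ^ n) {R : Set N} {x : N} :
    x ∈ Dagger R ↔ ∃ b ∈ R, x = b * b ^ n := by
  constructor
  · rintro ⟨b, hb, m, hm, hi, rfl⟩
    exact ⟨b, hb, by rw [dagger_pow_unique hm hn hi (hidem b)]⟩
  · rintro ⟨b, hb, rfl⟩
    exact ⟨b, hb, n, hn, hidem b, rfl⟩

private lemma crInvUnique [CommMonoid N] {a b c : N}
    (h1 : a * a * b = a) (h2 : b * b * a = b)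
    (h3 : a * a * c = a) (h4 : c * c * a = c) : b = c := by
  have hab : a * b = a * c := by
    calc a * b = a * a * c * b := by rw [h3]
      _ = a * a * b * c := by ac_rfl
      _ = a * c := by rw [h1]
  calc b = b * b * a := h2.symm
    _ = b * (a * b) := by ac_rfl
    _ = b * (a * c) := by rw [hab]
    _ = a * b * c := by ac_rfl
    _ = a * c * c := by rw [hab]
    _ = c * c * a := by ac_rfl
    _ = c := h4

private lemma dagger_inv_spec [CommMonoid N] {c : N} {n k : ℕ} (hnk : n = k + 1)
    (hidem : c ^ n * c ^ n = c ^ n) :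
    (c * c ^ n) * (c * c ^ n) * (c ^ k * c ^ n) = c * c ^ n ∧
    (c ^ k * c ^ n) * (c ^ k * c ^ n) * (c * c ^ n) = c ^ k * c ^ n := by
  have red := pow_reduce hidem
  have hc : c * c ^ n = c ^ (n + 1) := (pow_succ' c n).symm
  constructor
  · rw [hc, ← pow_add, ← pow_add, ← pow_add,
      show (n + 1) + (n + 1) + (k + n) = n + 3 * n + 1 by omega, red 3 1]
  · rw [hc, ← pow_add, ← pow_add, ← pow_add,
      show (k + n) + (k + n) + (n + 1) = n + 3 * n + k by omega, red 3 k, Nat.add_comm]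

end Aux

theorem cosetGen_dagger_prod_hom {M N : Type*} [Monoid M] [CommMonoid N] [Finite N]
    (F : Finset (M →* N)) (g : M → N) (hg : ∀ a : M, g a = ∏ f ∈ F, f a) (S : Set M) :
    CosetGen (Dagger (g '' S)) ⊆ ∏ f ∈ F, CosetGen (Dagger (⇑f '' S)) := by
  obtain ⟨n, hn, hidem⟩ := exists_uniform_idem (N := N)
  set k := n - 1 with hk
  have hnk : n = k + 1 := by omega
  -- key product identity
  have hprod : ∀ s : M, g s * g s ^ n = ∏ f ∈ F, (f s * f s ^ n) := by
    intro s
    rw [Finset.prod_mul_distrib, Finset.prod_pow, hg]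
  -- Dagger inclusion
  have hsub : Dagger (g '' S) ⊆ ∏ f ∈ F, Dagger (⇑f '' S) := by
    intro x hx
    rw [mem_dagger_iff hn hidem] at hx
    obtain ⟨b, ⟨s, hs, rfl⟩, rfl⟩ := hx
    rw [hprod s]
    exact Set.finset_prod_mem_finset_prod F _ _
      (fun f _ => (mem_dagger_iff hn hidem).2 ⟨f s, ⟨s, hs, rfl⟩, rfl⟩)
  -- InvSet inclusion
  have hinv : InvSet (Dagger (g '' S)) ⊆ ∏ f ∈ F, InvSet (Dagger (⇑f '' S)) := by
    rintro x ⟨a, ha, _, h1, h2⟩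
    rw [mem_dagger_iff hn hidem] at ha
    obtain ⟨b, ⟨s, hs, rfl⟩, rfl⟩ := ha
    have spec : ∀ f : M →* N,
        (f s * f s ^ n) * (f s * f s ^ n) * (f s ^ k * f s ^ n) = f s * f s ^ n ∧
        (f s ^ k * f s ^ n) * (f s ^ k * f s ^ n) * (f s * f s ^ n) = f s ^ k * f s ^ n :=
      fun f => dagger_inv_spec hnk (hidem (f s))
    set c : N := ∏ f ∈ F, (f s ^ k * f s ^ n) with hc
    have hA : (g s * g s ^ n) * (g s * g s ^ n) * c = g s * g s ^ n := by
      rw [hprod s, hc, ← Finset.prod_mul_distrib, ← Finset.prod_mul_distrib]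
      exact Finset.prod_congr rfl (fun f _ => (spec f).1)
    have hC : c * c * (g s * g s ^ n) = c := by
      rw [hprod s, hc, ← Finset.prod_mul_distrib, ← Finset.prod_mul_distrib]
      exact Finset.prod_congr rfl (fun f _ => (spec f).2)
    have hx : x = c := crInvUnique h1 h2 hA hC
    rw [hx, hc]
    refine Set.finset_prod_mem_finset_prod F _ _ (fun f _ => ?_)
    exact ⟨f s * f s ^ n, (mem_dagger_iff hn hidem).2 ⟨f s, ⟨s, hs, rfl⟩, rfl⟩,
      mul_comm _ _, (spec f).1, (spec f).2⟩
  -- generating sets inclusion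
  have hIR : InvSet (Dagger (g '' S)) * Dagger (g '' S) ⊆
      ∏ f ∈ F, (InvSet (Dagger (⇑f '' S)) * Dagger (⇑f '' S)) := by
    calc InvSet (Dagger (g '' S)) * Dagger (g '' S)
        ⊆ (∏ f ∈ F, InvSet (Dagger (⇑f '' S))) * ∏ f ∈ F, Dagger (⇑f '' S) :=
          Set.mul_subset_mul hinv hsub
      _ = ∏ f ∈ F, (InvSet (Dagger (⇑f '' S)) * Dagger (⇑f '' S)) :=
          Finset.prod_mul_distrib.symm
  -- closure inclusion
  have hclos : (Submonoid.closure (InvSet (Dagger (g '' S)) * Dagger (g '' S)) : Set N) ⊆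
      ∏ f ∈ F, (Submonoid.closure (InvSet (Dagger (⇑f '' S)) * Dagger (⇑f '' S)) : Set N) := by
    intro x hx
    induction hx using Submonoid.closure_induction with
    | mem y hy =>
      exact Set.finset_prod_subset_finset_prod F _ _
        (fun f _ => Submonoid.subset_closure) (hIR hy)
    | one =>
      have := Set.finset_prod_mem_finset_prod F
        (fun f => (Submonoid.closure (InvSet (Dagger (⇑f '' S)) * Dagger (⇑f '' S)) : Set N))
        (fun _ => 1) (fun f _ => Submonoid.one_mem _)
      simpa using this
    | mul y z hy hz hy' hz' =>
      rw [Set.mem_finset_prod] at hy' hz'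
      obtain ⟨gy, hgy, rfl⟩ := hy'
      obtain ⟨gz, hgz, rfl⟩ := hz'
      rw [← Finset.prod_mul_distrib]
      exact Set.finset_prod_mem_finset_prod F _ _
        (fun f hf => Submonoid.mul_mem _ (hgy hf) (hgz hf))
  -- conclusion
  calc CosetGen (Dagger (g '' S))
      = Dagger (g '' S) *
        (Submonoid.closure (InvSet (Dagger (g '' S)) * Dagger (g '' S)) : Set N) := rfl
    _ ⊆ (∏ f ∈ F, Dagger (⇑f '' S)) *
        ∏ f ∈ F, (Submonoid.closure (InvSet (Dagger (⇑f '' S)) * Dagger (⇑f '' S)) : Set N) :=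
          Set.mul_subset_mul hsub hclos
    _ = ∏ f ∈ F, (Dagger (⇑f '' S) *
        (Submonoid.closure (InvSet (Dagger (⇑f '' S)) * Dagger (⇑f '' S)) : Set N)) :=
          Finset.prod_mul_distrib.symm
    _ = ∏ f ∈ F, CosetGen (Dagger (⇑f '' S)) := Finset.prod_congr rfl (fun f _ => rfl)
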